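/- arXiv:1206.2333 — 4 statements merged into one kernel-verified Lean document; each statement's English description precedes it below -/
import Mathlib

section
/- Suppose 1_M ∉ T(R), where T(R) = {Σⱼ rⱼ tⱼ : Σⱼ tⱼ = 0}. Then the risk-component mapping Δr ↦ Δz, where Δz = Δr - 1_M⟨1_M,Δr⟩_ω, restricts to a linear isomorphism of T(R) onto T(Z), where T(Z) = {Σⱼ zⱼ tⱼ : Σⱼ tⱼ = 0} and zⱼ = rⱼ - 1_M⟨1_M,rⱼ⟩_ω. In particular the map is injective on T(R). -/
theorem stmt_3 (M n : ℕ) (ω : Fin M → ℝ)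
    (hω : ∀ i, 0 < ω i) (hsum : ∑ i, ω i = 1)
    (r : Fin n → Fin M → ℝ)
    (e : Fin n → ℝ) (he : ∀ j, e j = ∑ i, ω i * 1 * r j i)
    (z : Fin n → Fin M → ℝ) (hz : ∀ j, z j = fun i => r j i - 1 * e j)
    (TR : Set (Fin M → ℝ))
    (hTR : TR = {x | ∃ t : Fin n → ℝ, ∑ j, t j = 0 ∧ x = ∑ j, t j • r j})
    (TZ : Set (Fin M → ℝ))
    (hTZ : TZ = {x | ∃ t : Fin n → ℝ, ∑ j, t j = 0 ∧ x = ∑ j, t j • z j})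
    (hone : (fun _ : Fin M => (1 : ℝ)) ∉ TR)
    (φ : (Fin M → ℝ) → (Fin M → ℝ))
    (hφ : φ = fun x => fun i => x i - 1 * (∑ k, ω k * 1 * x k)) :
    Set.BijOn φ TR TZ := by
  subst hφ hTR hTZ
  have key : ∀ t : Fin n → ℝ,
      (fun x => fun i => x i - 1 * (∑ k, ω k * 1 * x k)) (∑ j, t j • r j)
        = ∑ j, t j • z j := by
    intro t
    funext i
    simp only [Finset.sum_apply, Pi.smul_apply, smul_eq_mul, hz]
    have h1 : (∑ k, ω k * 1 * (∑ j, t j * r j k)) = ∑ j, t j * e j := by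
      simp only [he, Finset.mul_sum]
      rw [Finset.sum_comm]
      exact Finset.sum_congr rfl fun j _ =>
        Finset.sum_congr rfl fun k _ => by ring
    rw [h1, Finset.mul_sum, ← Finset.sum_sub_distrib]
    exact Finset.sum_congr rfl fun j _ => by ring
  -- decomposition: Σ t•r = (Σ t*e) • 1 + Σ t•z
  have dec : ∀ t : Fin n → ℝ,
      (∑ j, t j • r j) = (∑ j, t j * e j) • (fun _ : Fin M => (1:ℝ)) + ∑ j, t j • z j := by
    intro t
    funext i
    simp only [Pi.add_apply, Pi.smul_apply, Finset.sum_apply, smul_eq_mul, hz,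
      mul_one, Finset.sum_mul, ← Finset.sum_add_distrib]
    exact Finset.sum_congr rfl fun j _ => by ring
  refine ⟨?_, ?_, ?_⟩
  · rintro x ⟨t, ht, rfl⟩
    exact ⟨t, ht, key t⟩
  · rintro x ⟨t, ht, rfl⟩ y ⟨s, hs, rfl⟩ hxy
    rw [key t, key s] at hxy
    by_contra hne
    set u : Fin n → ℝ := fun j => t j - s j with hu
    have husum : ∑ j, u j = 0 := by
      simp only [hu, Finset.sum_sub_distrib, ht, hs, sub_zero]
    have huz : (∑ j, u j • z j) = 0 := by
      simp only [hu, sub_smul, Finset.sum_sub_distrib, hxy, sub_self]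
    have hur : (∑ j, u j • r j) = ∑ j, t j • r j - ∑ j, s j • r j := by
      simp only [hu, sub_smul, Finset.sum_sub_distrib]
    set c : ℝ := ∑ j, u j * e j with hc
    have hdc : (∑ j, u j • r j) = c • (fun _ : Fin M => (1:ℝ)) := by
      rw [dec u, huz, add_zero]
    have hcne : c ≠ 0 := by
      intro h0
      apply hne
      have : (∑ j, t j • r j) - ∑ j, s j • r j = 0 := by
        rw [← hur, hdc, h0, zero_smul]
      exact sub_eq_zero.mp this
    apply hone
    refine ⟨fun j => c⁻¹ * u j, ?_, ?_⟩
    · rw [← Finset.mul_sum, husum, mul_zero]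
    · funext i
      have := congrFun hdc i
      simp only [Finset.sum_apply, Pi.smul_apply, smul_eq_mul] at this ⊢
      rw [mul_one] at this
      calc (1:ℝ) = c⁻¹ * c := by rw [inv_mul_cancel₀ hcne]
        _ = c⁻¹ * ∑ j, u j * r j i := by rw [this]
        _ = ∑ j, c⁻¹ * u j * r j i := by rw [Finset.mul_sum]; exact Finset.sum_congr rfl fun j _ => by ring
  · rintro x ⟨t, ht, rfl⟩
    exact ⟨∑ j, t j • r j, ⟨t, ht, rfl⟩, key t⟩
end

section
/- If 1_M ∉ T(R), then the assignment Σⱼ zⱼ tⱼ ↦ Σⱼ rⱼ tⱼ for coefficient vectors t with Σⱼ tⱼ = 1 is well-defined: if Σⱼ zⱼ tⱼ = Σⱼ zⱼ sⱼ with Σⱼ tⱼ = Σⱼ sⱼ = 1, then Σⱼ rⱼ tⱼ = Σⱼ rⱼ sⱼ. -/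
theorem stmt_4 (M n : ℕ) (ω : Fin M → ℝ)
    (hω : ∀ i, 0 < ω i) (hsum : ∑ i, ω i = 1)
    (r : Fin n → Fin M → ℝ)
    (e : Fin n → ℝ) (he : ∀ j, e j = ∑ i, ω i * 1 * r j i)
    (z : Fin n → Fin M → ℝ) (hz : ∀ j, z j = fun i => r j i - 1 * e j)
    (hone : (fun _ : Fin M => (1 : ℝ)) ∉
      {x | ∃ t : Fin n → ℝ, ∑ j, t j = 0 ∧ x = ∑ j, t j • r j})
    (t s : Fin n → ℝ) (ht : ∑ j, t j = 1) (hs : ∑ j, s j = 1)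
    (hzz : ∑ j, t j • z j = ∑ j, s j • z j) :
    ∑ j, t j • r j = ∑ j, s j • r j := by
  classical
  set c := ∑ j, (t j - s j) * e j with hc
  have key : ∀ i, ∑ j, (t j - s j) * r j i = c := by
    intro i
    have h := congrFun hzz i
    simp only [Finset.sum_apply, Pi.smul_apply, hz, smul_eq_mul, one_mul] at h
    have h0 : ∑ j, (t j - s j) * (r j i - e j) = 0 := by
      have h1 : ∑ j, (t j * (r j i - e j) - s j * (r j i - e j)) = 0 := by
        rw [Finset.sum_sub_distrib, h, sub_self]
      rw [← h1]
      exact Finset.sum_congr rfl fun j _ => by ring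
    calc ∑ j, (t j - s j) * r j i
        = ∑ j, ((t j - s j) * (r j i - e j) + (t j - s j) * e j) :=
          Finset.sum_congr rfl fun j _ => by ring
      _ = 0 + c := by rw [Finset.sum_add_distrib, h0]
      _ = c := zero_add c
  rcases eq_or_ne c 0 with h0 | h0
  · funext i
    have hk := key i; rw [h0] at hk
    have h1 : ∑ j, (t j * r j i - s j * r j i) = 0 := by
      rw [← hk]; exact Finset.sum_congr rfl fun j _ => by ring
    rw [Finset.sum_sub_distrib] at h1
    simp only [Finset.sum_apply, Pi.smul_apply, smul_eq_mul]
    linarith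
  · exact absurd
      ⟨fun j => (t j - s j) / c, by
        rw [← Finset.sum_div, Finset.sum_sub_distrib, ht, hs, sub_self, zero_div], by
        funext i
        simp only [Finset.sum_apply, Pi.smul_apply, smul_eq_mul]
        have h2 : ∑ x, (t x - s x) / c * r x i = (∑ x, (t x - s x) * r x i) / c := by
          rw [Finset.sum_div]
          exact Finset.sum_congr rfl fun j _ => by ring
        rw [h2, key, div_self h0]⟩ hone
end

section
/- Let v₁ be a unit vector in T(R) such that ⟨1_M, Δr⟩_ω = ⟨1_M, v₁⟩_ω · ⟨v₁, Δr⟩_ω for all Δr ∈ T(R) (v₁ is the normalized orthogonal projection of 1_M onto T(R)). Write v₁ = u₁ cos φ + 1_M sin φ with u₁ a unit vector orthogonal to 1_M and 0 < φ < π/2. Then for every Δr ∈ T(R), setting Δe = ⟨1_M, Δr⟩_ω and Δz = Δr - 1_M·Δe, one has Δe = tan(φ)·⟨u₁, Δz⟩_ω. -/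
theorem stmt_10 (M : ℕ) (ω : Fin M → ℝ)
    (hω : ∀ i, 0 < ω i) (hsum : ∑ i, ω i = 1)
    (TR : Submodule ℝ (Fin M → ℝ))
    (hone : (fun _ : Fin M => (1 : ℝ)) ∉ TR)
    (v₁ : Fin M → ℝ) (hv₁ : v₁ ∈ TR)
    (hv₁unit : ∑ i, ω i * v₁ i * v₁ i = 1)
    (hproj : ∀ Δr ∈ TR,
      ∑ i, ω i * 1 * Δr i = (∑ i, ω i * 1 * v₁ i) * (∑ i, ω i * v₁ i * Δr i))
    (u₁ : Fin M → ℝ) (hu₁unit : ∑ i, ω i * u₁ i * u₁ i = 1)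
    (hu₁orth : ∑ i, ω i * 1 * u₁ i = 0)
    (φ : ℝ) (hφ₁ : 0 < φ) (hφ₂ : φ < Real.pi / 2)
    (hdecomp : v₁ = fun i => u₁ i * Real.cos φ + 1 * Real.sin φ) :
    ∀ Δr ∈ TR,
      ∀ Δe : ℝ, Δe = ∑ i, ω i * 1 * Δr i →
      ∀ Δz : Fin M → ℝ, Δz = (fun i => Δr i - 1 * Δe) →
      Δe = Real.tan φ * ∑ i, ω i * u₁ i * Δz i := by
  intro Δr hΔr Δe hΔe Δz hΔz
  have hc : 0 < Real.cos φ := Real.cos_pos_of_mem_Ioo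
    ⟨by linarith [Real.pi_pos], hφ₂⟩
  set A := ∑ i, ω i * u₁ i * Δr i with hA
  have h1 : ∑ i, ω i * 1 * v₁ i = Real.sin φ := by
    rw [hdecomp]
    have : ∀ i ∈ Finset.univ, ω i * 1 * (u₁ i * Real.cos φ + 1 * Real.sin φ)
        = Real.cos φ * (ω i * 1 * u₁ i) + Real.sin φ * ω i := fun i _ => by ring
    rw [Finset.sum_congr rfl this, Finset.sum_add_distrib, ← Finset.mul_sum,
      ← Finset.mul_sum, hu₁orth, hsum]
    ring
  have h2 : ∑ i, ω i * v₁ i * Δr i = Real.cos φ * A + Real.sin φ * Δe := by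
    rw [hdecomp, hΔe]
    have : ∀ i ∈ Finset.univ, ω i * (u₁ i * Real.cos φ + 1 * Real.sin φ) * Δr i
        = Real.cos φ * (ω i * u₁ i * Δr i) + Real.sin φ * (ω i * 1 * Δr i) :=
      fun i _ => by ring
    rw [Finset.sum_congr rfl this, Finset.sum_add_distrib, ← Finset.mul_sum,
      ← Finset.mul_sum]
  have h3 : ∑ i, ω i * u₁ i * Δz i = A := by
    rw [hΔz]
    have : ∀ i ∈ Finset.univ, ω i * u₁ i * (Δr i - 1 * Δe)
        = (ω i * u₁ i * Δr i) - Δe * (ω i * 1 * u₁ i) := fun i _ => by ring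
    rw [Finset.sum_congr rfl this, Finset.sum_sub_distrib, ← Finset.mul_sum,
      hu₁orth]
    simp [hA]
  have key := hproj Δr hΔr
  rw [h1, h2, ← hΔe] at key
  rw [h3, Real.tan_eq_sin_div_cos]
  have hs := Real.sin_sq_add_cos_sq φ
  field_simp
  have h4 : Δe * Real.cos φ * Real.cos φ = Real.sin φ * A * Real.cos φ := by
    linear_combination key + Δe * hs
  exact mul_right_cancel₀ (ne_of_gt hc) h4
end

section
/- Under the assumptions of the productive-risk setup (1_M ∉ T(R), not all eⱼ equal), there exist constants e₀ ∈ R, e_F > 0 and a unit vector u₁ ∈ T(Z) such that for every r = z + 1_M·e in the flat F(R) (with e = ⟨1_M,r⟩_ω, z the risk component), e = e₀ + e_F·⟨u₁, z⟩_ω. -/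
/-!
Along the direction `T(R)` of the flat, the expectation varies by the linear functional
`∑ tⱼ rⱼ ↦ ∑ tⱼ eⱼ` (`∑ tⱼ = 0`). If such a combination has zero risk `∑ tⱼ zⱼ`, then
`∑ tⱼ rⱼ = (∑ tⱼ eⱼ) 1_M ∈ T(R)`, so `1_M ∉ T(R)` forces `∑ tⱼ eⱼ = 0`: the functional factors through
the risk projection and is a linear functional on `T(Z)`. Riesz representation for the
`ω`-weighted inner product writes it as `⟨v, ·⟩_ω` with `v ∈ T(Z)`, and `v ≠ 0` since not all `eⱼ`
are equal. Then `e_F = ‖v‖_ω`, `u₁ = v / e_F` and `e₀ = e_* - e_F ⟨u₁, z_*⟩_ω`.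
-/

open scoped RealInnerProductSpace
open LinearMap

theorem LinearMap.exists_inner_eq_of_ker_le {V E : Type*} [AddCommGroup V] [Module ℝ V]
    [FiniteDimensional ℝ V] [NormedAddCommGroup E] [InnerProductSpace ℝ E]
    (L : V →ₗ[ℝ] E) (a : V →ₗ[ℝ] ℝ) (h : ker L ≤ ker a) :
    ∃ c, ∀ t, ⟪L c, L t⟫ = a t := by
  let ℓ : range L →ₗ[ℝ] ℝ := (ker L).liftQ a h ∘ₗ L.quotKerEquivRange.symm.toLinearMap
  obtain ⟨c, hc⟩ := ((InnerProductSpace.toDual ℝ (range L)).symm ℓ.toContinuousLinearMap).2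
  refine ⟨c, fun t => ?_⟩
  have hℓ : ℓ ⟨L t, mem_range_self L t⟩ = a t := by
    simp only [ℓ, comp_apply, LinearEquiv.coe_coe, quotKerEquivRange_symm_apply_image,
      Submodule.mkQ_apply, Submodule.liftQ_apply]
  rw [← hℓ, hc]
  exact InnerProductSpace.toDual_symm_apply (x := (⟨L t, mem_range_self L t⟩ : range L))

/-- Multiplying coordinates by `√ωᵢ` turns `⟨x, y⟩_ω = ∑ ωᵢ xᵢ yᵢ` into the Euclidean inner product. -/
noncomputable def sqrtWeight {ι : Type*} (ω : ι → ℝ) : (ι → ℝ) →ₗ[ℝ] EuclideanSpace ℝ ι where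
  toFun x := WithLp.toLp 2 fun i => √(ω i) * x i
  map_add' x y := by ext i; simp [mul_add]
  map_smul' c x := by ext i; simp [mul_left_comm]

theorem inner_sqrtWeight {ι : Type*} [Fintype ι] {ω : ι → ℝ} (hω : ∀ i, 0 ≤ ω i)
    (x y : ι → ℝ) : ⟪sqrtWeight ω x, sqrtWeight ω y⟫ = ∑ i, ω i * x i * y i := by
  simp only [sqrtWeight, coe_mk, AddHom.coe_mk, PiLp.inner_apply, RCLike.inner_apply,
    conj_trivial]
  refine Finset.sum_congr rfl fun i _ => ?_
  linear_combination (x i * y i) * Real.mul_self_sqrt (hω i)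

theorem sqrtWeight_injective {ι : Type*} {ω : ι → ℝ} (hω : ∀ i, 0 < ω i) :
    Function.Injective (sqrtWeight ω) := by
  intro x y hxy
  funext i
  have := congrArg (· i) hxy
  simpa [sqrtWeight, (Real.sqrt_pos.2 (hω i)).ne'] using this

def sumZero (κ : Type*) [Fintype κ] : Submodule ℝ (κ → ℝ) := ker (∑ j, proj j)

theorem mem_sumZero {κ : Type*} [Fintype κ] {t : κ → ℝ} : t ∈ sumZero κ ↔ ∑ j, t j = 0 := by
  simp [sumZero]

section Portfolio

variable {ι κ : Type*} [Fintype κ] {r z : κ → ι → ℝ} {e : κ → ℝ}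

theorem sum_mul_eq_zero_of_sum_smul_eq_zero (hz : ∀ j, z j = fun i => r j i - 1 * e j)
    (hone : (fun _ : ι => (1 : ℝ)) ∉ {x | ∃ t : κ → ℝ, ∑ j, t j = 0 ∧ x = ∑ j, t j • r j})
    {t : κ → ℝ} (ht : ∑ j, t j = 0) (htz : ∑ j, t j • z j = 0) : ∑ j, t j * e j = 0 := by
  have hr : ∑ j, t j • r j = (∑ j, t j * e j) • fun _ => (1 : ℝ) := by
    have hrz : ∀ j, r j = z j + e j • fun _ => 1 := by intro j; rw [hz j]; funext i; simp
    simp only [hrz, smul_add, Finset.sum_add_distrib, htz, zero_add, smul_smul, ← Finset.sum_smul]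
  by_contra hs
  refine hone ⟨fun j => (∑ j, t j * e j)⁻¹ * t j, by rw [← Finset.mul_sum, ht, mul_zero], ?_⟩
  simp only [← smul_smul, ← Finset.smul_sum, hr, inv_smul_smul₀ hs]

theorem expectation_sum_smul [Fintype ι] {ω : ι → ℝ} (he : ∀ j, e j = ∑ i, ω i * 1 * r j i)
    (t : κ → ℝ) : ∑ i, ω i * 1 * (∑ j, t j • r j) i = ∑ j, t j * e j := by
  simp only [he, Finset.sum_apply, Pi.smul_apply, smul_eq_mul, Finset.mul_sum]
  rw [Finset.sum_comm]
  exact Finset.sum_congr rfl fun j _ => Finset.sum_congr rfl fun i _ => by ring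

theorem risk_sum_smul (hz : ∀ j, z j = fun i => r j i - 1 * e j) (t : κ → ℝ) :
    (fun i => (∑ j, t j • r j) i - 1 * ∑ j, t j * e j) = ∑ j, t j • z j := by
  funext i
  simp only [hz, Finset.sum_apply, Pi.smul_apply, smul_eq_mul, Finset.mul_sum,
    ← Finset.sum_sub_distrib]
  exact Finset.sum_congr rfl fun j _ => by ring

theorem exists_risk_representer [Fintype ι] {ω : ι → ℝ} (hω : ∀ i, 0 < ω i)
    (hz : ∀ j, z j = fun i => r j i - 1 * e j)
    (hone : (fun _ : ι => (1 : ℝ)) ∉ {x | ∃ t : κ → ℝ, ∑ j, t j = 0 ∧ x = ∑ j, t j • r j}) :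
    ∃ c ∈ sumZero κ, ∀ t ∈ sumZero κ,
      ⟪sqrtWeight ω (∑ j, c j • z j), sqrtWeight ω (∑ j, t j • z j)⟫ = ∑ j, t j * e j := by
  set Z := Fintype.linearCombination ℝ z ∘ₗ (sumZero κ).subtype
  set a := Fintype.linearCombination ℝ e ∘ₗ (sumZero κ).subtype
  have hker : ker (sqrtWeight ω ∘ₗ Z) ≤ ker a := by
    intro t ht
    simp only [Z, a, mem_ker, comp_apply, Submodule.subtype_apply,
      Fintype.linearCombination_apply, smul_eq_mul] at ht ⊢
    exact sum_mul_eq_zero_of_sum_smul_eq_zero hz hone (mem_sumZero.1 t.2)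
      (sqrtWeight_injective hω (ht.trans (map_zero _).symm))
  obtain ⟨c, hc⟩ := (sqrtWeight ω ∘ₗ Z).exists_inner_eq_of_ker_le a hker
  exact ⟨c, c.2, fun t ht => by simpa [Z, a, Fintype.linearCombination_apply] using hc ⟨t, ht⟩⟩

theorem inner_sum_smul_sub_inner_eq {E : Type*} [NormedAddCommGroup E] [InnerProductSpace ℝ E]
    [DecidableEq κ] {L : (ι → ℝ) →ₗ[ℝ] E} {v : E}
    (hrep : ∀ t ∈ sumZero κ, ⟪v, L (∑ j, t j • z j)⟫ = ∑ j, t j * e j)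
    {t : κ → ℝ} (ht : ∑ j, t j = 1) (k : κ) :
    ⟪v, L (∑ j, t j • z j)⟫ - ⟪v, L (z k)⟫ = ∑ j, t j * e j - e k := by
  have h := hrep (t - Pi.single k 1) (mem_sumZero.2 (by simp [ht]))
  simpa only [Pi.sub_apply, sub_smul, sub_mul, Finset.sum_sub_distrib, Pi.single_apply, ite_smul,
    one_smul, zero_smul, ite_mul, one_mul, zero_mul, Finset.sum_ite_eq', Finset.mem_univ,
    if_true, map_sub, inner_sub_right] using h

end Portfolio

theorem stmt_11_general (M n : ℕ) (ω : Fin M → ℝ)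
    (hω : ∀ i, 0 < ω i)
    (r : Fin n → Fin M → ℝ)
    (e : Fin n → ℝ) (he : ∀ j, e j = ∑ i, ω i * 1 * r j i)
    (z : Fin n → Fin M → ℝ) (hz : ∀ j, z j = fun i => r j i - 1 * e j)
    (hone : (fun _ : Fin M => (1 : ℝ)) ∉
      {x | ∃ t : Fin n → ℝ, ∑ j, t j = 0 ∧ x = ∑ j, t j • r j})
    (hne : ∃ j k, e j ≠ e k) :
    ∃ (e₀ eF : ℝ) (u₁ : Fin M → ℝ), 0 < eF ∧
      (∃ t : Fin n → ℝ, ∑ j, t j = 0 ∧ u₁ = ∑ j, t j • z j) ∧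
      (∑ i, ω i * u₁ i * u₁ i = 1) ∧
      ∀ t : Fin n → ℝ, ∑ j, t j = 1 →
        ∀ rt : Fin M → ℝ, rt = ∑ j, t j • r j →
        ∀ et : ℝ, et = ∑ i, ω i * 1 * rt i →
        ∀ zt : Fin M → ℝ, zt = (fun i => rt i - 1 * et) →
        et = e₀ + eF * ∑ i, ω i * u₁ i * zt i := by
  obtain ⟨j, k, hjk⟩ := hne
  have hinner : ∀ x y, ∑ i, ω i * x i * y i = ⟪sqrtWeight ω x, sqrtWeight ω y⟫ :=
    fun x y => (inner_sqrtWeight (fun i => (hω i).le) x y).symm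
  obtain ⟨c, hc, hrep⟩ := exists_risk_representer hω hz hone
  set u := ∑ j, c j • z j
  have hu : sqrtWeight ω u ≠ 0 := by
    intro h0
    have := inner_sum_smul_sub_inner_eq hrep (t := Pi.single j 1) (by simp) k
    simp only [Pi.single_apply, ite_smul, one_smul, zero_smul, Finset.sum_ite_eq',
      Finset.mem_univ, if_true, ite_mul, one_mul, zero_mul, h0, inner_zero_left, sub_self] at this
    exact hjk (sub_eq_zero.1 this.symm)
  set eF := ‖sqrtWeight ω u‖
  refine ⟨e k - ⟪sqrtWeight ω u, sqrtWeight ω (z k)⟫, eF, eF⁻¹ • u, norm_pos_iff.2 hu,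
    ⟨eF⁻¹ • c, by simp [← Finset.mul_sum, mem_sumZero.1 hc], by simp [u, Finset.smul_sum, smul_smul]⟩,
    ?_, ?_⟩
  · have hunit : ‖eF⁻¹ • sqrtWeight ω u‖ = 1 := norm_smul_inv_norm (𝕜 := ℝ) hu
    rw [hinner, map_smul, real_inner_self_eq_norm_mul_norm, hunit, mul_one]
  · rintro t ht _ rfl _ rfl _ rfl
    rw [expectation_sum_smul he, risk_sum_smul hz, hinner, map_smul, real_inner_smul_left,
      mul_inv_cancel_left₀ (norm_pos_iff.2 hu).ne']
    linarith [inner_sum_smul_sub_inner_eq hrep ht k]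

theorem stmt_11 (M n : ℕ) (ω : Fin M → ℝ)
    (hω : ∀ i, 0 < ω i) (hsum : ∑ i, ω i = 1)
    (r : Fin n → Fin M → ℝ)
    (e : Fin n → ℝ) (he : ∀ j, e j = ∑ i, ω i * 1 * r j i)
    (z : Fin n → Fin M → ℝ) (hz : ∀ j, z j = fun i => r j i - 1 * e j)
    (hone : (fun _ : Fin M => (1 : ℝ)) ∉
      {x | ∃ t : Fin n → ℝ, ∑ j, t j = 0 ∧ x = ∑ j, t j • r j})
    (hne : ∃ j k, e j ≠ e k) :
    ∃ (e₀ eF : ℝ) (u₁ : Fin M → ℝ), 0 < eF ∧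
      (∃ t : Fin n → ℝ, ∑ j, t j = 0 ∧ u₁ = ∑ j, t j • z j) ∧
      (∑ i, ω i * u₁ i * u₁ i = 1) ∧
      ∀ t : Fin n → ℝ, ∑ j, t j = 1 →
        ∀ rt : Fin M → ℝ, rt = ∑ j, t j • r j →
        ∀ et : ℝ, et = ∑ i, ω i * 1 * rt i →
        ∀ zt : Fin M → ℝ, zt = (fun i => rt i - 1 * et) →
        et = e₀ + eF * ∑ i, ω i * u₁ i * zt i :=
  stmt_11_general M n ω hω r e he z hz hone hne
end
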